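/- arXiv:1608.04091 — 10 statements merged into one kernel-verified Lean document; each statement's English description precedes it below -/
import Mathlib

section
/- The strict sublevel-set inclusion {y : φ_{A,k}(y) < t} ⊆ A + tk holds for all t ∈ ℝ if and only if k ∈ −0⁺A, where 0⁺A is the recession cone of A. -/
/-- `phi A k y = inf { t : ℝ | y ∈ A + t • k }`, valued in `EReal`
(`⊤` plays the role of the symbol `ν = inf ∅`, `⊥` is `-∞`). -/
noncomputable def phi {Y : Type*} [AddCommGroup Y] [Module ℝ Y]
    (A : Set Y) (k : Y) (y : Y) : EReal :=
  sInf ((fun t : ℝ => (t : EReal)) '' {t : ℝ | y - t • k ∈ A})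

/-- The algebraic interior (core) of a set. -/
def algCore {Y : Type*} [AddCommGroup Y] [Module ℝ Y] (A : Set Y) : Set Y :=
  {a | a ∈ A ∧ ∀ y : Y, ∃ t : ℝ, 0 < t ∧ ∀ s : ℝ, 0 ≤ s → s ≤ t → a + s • y ∈ A}

/-- The recession cone `0⁺A`. -/
def recCone {Y : Type*} [AddCommGroup Y] [Module ℝ Y] (A : Set Y) : Set Y :=
  {u | ∀ a ∈ A, ∀ t : ℝ, 0 ≤ t → a + t • u ∈ A}

/-- `A` is `k`-directionally closed. -/
def DirClosed {Y : Type*} [AddCommGroup Y] [Module ℝ Y] (A : Set Y) (k : Y) : Prop :=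
  ∀ y : Y, (∃ t : ℕ → ℝ, (∀ n, 0 < t n) ∧ Antitone t ∧
    Filter.Tendsto t Filter.atTop (nhds 0) ∧ ∀ n, y - t n • k ∈ A) → y ∈ A

/-- `A` is algebraically closed. -/
def AlgClosed {Y : Type*} [AddCommGroup Y] [Module ℝ Y] (A : Set Y) : Prop :=
  ∀ a ∈ A, ∀ y : Y, (∀ l : ℝ, 0 < l → l < 1 → a + l • (y - a) ∈ A) → y ∈ A

/-- `C` is a cone: closed under nonnegative scalar multiplication. -/
def IsCone {Y : Type*} [AddCommGroup Y] [Module ℝ Y] (C : Set Y) : Prop :=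
  ∀ l : ℝ, 0 ≤ l → ∀ c ∈ C, l • c ∈ C

section

variable {Y : Type*} [AddCommGroup Y] [Module ℝ Y] {A : Set Y} {k y : Y}

theorem phi_le_of_sub_smul_mem {t : ℝ} (h : y - t • k ∈ A) : phi A k y ≤ t :=
  sInf_le ⟨t, h, rfl⟩

theorem exists_sub_smul_mem_of_phi_lt {t : ℝ} (h : phi A k y < t) :
    ∃ r < t, y - r • k ∈ A := by
  obtain ⟨_, ⟨r, hr, rfl⟩, hrt⟩ := sInf_lt_iff.mp h
  exact ⟨r, EReal.coe_lt_coe_iff.mp hrt, hr⟩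

theorem sub_smul_mem_of_neg_mem_recCone (hk : -k ∈ recCone A) {r t : ℝ}
    (hr : y - r • k ∈ A) (hrt : r ≤ t) : y - t • k ∈ A := by
  have h := hk _ hr (t - r) (sub_nonneg.mpr hrt)
  rwa [smul_neg, sub_smul, ← sub_eq_add_neg, sub_sub, add_sub_cancel] at h

end

theorem strict_sublevel_subset_iff_general {Y : Type*} [AddCommGroup Y] [Module ℝ Y]
    (A : Set Y) (k : Y) :
    (∀ t : ℝ, {y : Y | phi A k y < (t : EReal)} ⊆ {y : Y | y - t • k ∈ A}) ↔
      -k ∈ recCone A := by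
  constructor
  · intro h a ha t ht
    rcases ht.eq_or_lt with rfl | ht
    · simpa using ha
    · have hphi : phi A k a < t :=
        (phi_le_of_sub_smul_mem (t := 0) (by simpa using ha)).trans_lt (EReal.coe_lt_coe ht)
      rw [smul_neg, ← sub_eq_add_neg]
      exact h t hphi
  · intro hk t y hy
    obtain ⟨r, hrt, hr⟩ := exists_sub_smul_mem_of_phi_lt hy
    exact sub_smul_mem_of_neg_mem_recCone hk hr hrt.le

theorem strict_sublevel_subset_iff {Y : Type*} [AddCommGroup Y] [Module ℝ Y]
    (A : Set Y) (hA : A.Nonempty) (k : Y) (hk : k ≠ 0) :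
    (∀ t : ℝ, {y : Y | phi A k y < (t : EReal)} ⊆ {y : Y | y - t • k ∈ A}) ↔
      -k ∈ recCone A :=
  strict_sublevel_subset_iff_general A k
end

section
/- If A is k-directionally closed, then the level set {y : φ_{A,k}(y) = t} is contained in A + tk for every t ∈ ℝ. -/
/-!
If `φ(y) = t`, then `t` is the infimum of the nonempty set `S = {s | y - s • k ∈ A}`.
Either `t ∈ S`, or `S` contains a strictly decreasing sequence `sₙ ↓ t`; in the latter case
`(y - t • k) - (sₙ - t) • k ∈ A` with `sₙ - t ↓ 0`, and directional closedness puts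
`y - t • k` in `A`.
-/

section

variable {Y : Type*} [AddCommGroup Y] [Module ℝ Y] {A : Set Y} {k y : Y} {t : ℝ}

theorem nonempty_of_phi_eq_coe (h : phi A k y = t) : {s : ℝ | y - s • k ∈ A}.Nonempty := by
  by_contra hS
  rw [Set.not_nonempty_iff_eq_empty] at hS
  simp [phi, hS] at h

theorem isGLB_of_phi_eq_coe (h : phi A k y = t) : IsGLB {s : ℝ | y - s • k ∈ A} t :=
  IsGLB.of_image (f := ((↑) : ℝ → EReal)) EReal.coe_le_coe_iff (h ▸ isGLB_sInf _)

theorem DirClosed.sub_smul_mem_of_isGLB (hdc : DirClosed A k)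
    (hglb : IsGLB {s : ℝ | y - s • k ∈ A} t) (hne : {s : ℝ | y - s • k ∈ A}.Nonempty) :
    y - t • k ∈ A := by
  by_contra ht
  obtain ⟨s, hs_anti, ht_lt, hs_lim, hs_mem⟩ :=
    hglb.exists_seq_strictAnti_tendsto_of_notMem ht hne
  refine ht (hdc _ ⟨fun n ↦ s n - t, fun n ↦ sub_pos.2 (ht_lt n),
    fun m n hmn ↦ sub_le_sub_right (hs_anti.antitone hmn) t, ?_, fun n ↦ ?_⟩)
  · simpa using hs_lim.sub_const t
  · simpa [sub_smul, sub_sub] using hs_mem n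

end

theorem level_set_subset_of_dirClosed_general {Y : Type*} [AddCommGroup Y] [Module ℝ Y]
    (A : Set Y) (k : Y)
    (hdc : DirClosed A k) :
    ∀ (t : ℝ) (y : Y), phi A k y = (t : EReal) → y - t • k ∈ A :=
  fun _ _ h ↦ hdc.sub_smul_mem_of_isGLB (isGLB_of_phi_eq_coe h) (nonempty_of_phi_eq_coe h)

theorem level_set_subset_of_dirClosed {Y : Type*} [AddCommGroup Y] [Module ℝ Y]
    (A : Set Y) (hA : A.Nonempty) (k : Y) (hk : k ≠ 0)
    (hdc : DirClosed A k) :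
    ∀ (t : ℝ) (y : Y), phi A k y = (t : EReal) → y - t • k ∈ A :=
  level_set_subset_of_dirClosed_general A k hdc
end

section
/- The condition A − {tk : t > 0} ⊆ core A is equivalent to the statement that {y : φ_{A,k}(y) < t} = core A + tk for all t ∈ ℝ. -/
section

variable {Y : Type*} [AddCommGroup Y] [Module ℝ Y] {A : Set Y} {k y : Y}

theorem phi_lt_coe_iff {t : ℝ} : phi A k y < t ↔ ∃ s < t, y - s • k ∈ A := by
  simp only [phi, sInf_lt_iff, Set.mem_image, Set.mem_ofPred_eq]
  constructor
  · rintro ⟨_, ⟨s, hs, rfl⟩, hst⟩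
    exact ⟨s, EReal.coe_lt_coe_iff.mp hst, hs⟩
  · rintro ⟨s, hst, hs⟩
    exact ⟨s, ⟨s, hs, rfl⟩, EReal.coe_lt_coe_iff.mpr hst⟩

theorem exists_pos_add_smul_mem_of_mem_algCore {a : Y} (ha : a ∈ algCore A) (v : Y) :
    ∃ ε : ℝ, 0 < ε ∧ a + ε • v ∈ A :=
  let ⟨ε, hε, hεA⟩ := ha.2 v
  ⟨ε, hε, hεA ε hε.le le_rfl⟩

theorem phi_lt_coe_iff_sub_smul_mem_algCore
    (h : ∀ a ∈ A, ∀ t : ℝ, 0 < t → a - t • k ∈ algCore A) (t : ℝ) :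
    phi A k y < t ↔ y - t • k ∈ algCore A := by
  rw [phi_lt_coe_iff]
  constructor
  · rintro ⟨s, hst, hs⟩
    have hcore := h _ hs (t - s) (sub_pos.mpr hst)
    rwa [sub_sub, ← add_smul, add_sub_cancel] at hcore
  · intro hcore
    obtain ⟨ε, hε, hεA⟩ := exists_pos_add_smul_mem_of_mem_algCore hcore k
    refine ⟨t - ε, sub_lt_self t hε, ?_⟩
    convert hεA using 1
    module

end

theorem strict_sublevel_eq_core_iff_general {Y : Type*} [AddCommGroup Y] [Module ℝ Y]
    (A : Set Y) (k : Y) :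
    (∀ a ∈ A, ∀ t : ℝ, 0 < t → a - t • k ∈ algCore A) ↔
      (∀ t : ℝ, {y : Y | phi A k y < (t : EReal)} = {y : Y | y - t • k ∈ algCore A}) := by
  refine ⟨fun h t => Set.ext fun y => phi_lt_coe_iff_sub_smul_mem_algCore h t, ?_⟩
  intro h a ha t ht
  have hlt : a ∈ {y : Y | phi A k y < (t : EReal)} :=
    phi_lt_coe_iff.mpr ⟨0, ht, by rwa [zero_smul, sub_zero]⟩
  rwa [h t] at hlt

theorem strict_sublevel_eq_core_iff {Y : Type*} [AddCommGroup Y] [Module ℝ Y]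
    (A : Set Y) (hA : A.Nonempty) (k : Y) (hk : k ≠ 0) :
    (∀ a ∈ A, ∀ t : ℝ, 0 < t → a - t • k ∈ algCore A) ↔
      (∀ t : ℝ, {y : Y | phi A k y < (t : EReal)} = {y : Y | y - t • k ∈ algCore A}) :=
  strict_sublevel_eq_core_iff_general A k
end

section
/- If A is algebraically closed and k ∈ −0⁺A \ {0}, then A is k-directionally closed. -/
/-! Since `-k` is a recession direction, the set `{t | y - t • k ∈ A}` is an up-set, so a
sequence `t n ↓ 0` in it forces `y - s • k ∈ A` for every `s > 0`. Then `y` is the endpoint of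
the segment from `y - k ∈ A` whose open part `{y - s • k | 0 < s < 1}` lies in `A`, and
algebraic closedness gives `y ∈ A`. -/

section

variable {Y : Type*} [AddCommGroup Y] [Module ℝ Y] {A : Set Y} {k y : Y}

lemma sub_smul_mem_of_le (hrec : -k ∈ recCone A) {t s : ℝ} (hts : t ≤ s)
    (ht : y - t • k ∈ A) : y - s • k ∈ A := by
  have h := hrec _ ht (s - t) (sub_nonneg.mpr hts)
  rwa [show y - t • k + (s - t) • -k = y - s • k by module] at h

lemma sub_smul_mem_of_tendsto (hrec : -k ∈ recCone A) {t : ℕ → ℝ}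
    (htend : Filter.Tendsto t Filter.atTop (nhds 0)) (hmem : ∀ n, y - t n • k ∈ A)
    {s : ℝ} (hs : 0 < s) : y - s • k ∈ A := by
  obtain ⟨n, hn⟩ := (htend.eventually (gt_mem_nhds hs)).exists
  exact sub_smul_mem_of_le hrec hn.le (hmem n)

lemma AlgClosed.mem_of_forall_sub_smul_mem (hcl : AlgClosed A)
    (h : ∀ s : ℝ, 0 < s → y - s • k ∈ A) : y ∈ A := by
  refine hcl (y - (1 : ℝ) • k) (h 1 one_pos) y fun l _ hl1 => ?_
  rw [show y - (1 : ℝ) • k + l • (y - (y - (1 : ℝ) • k)) = y - (1 - l) • k by module]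
  exact h _ (sub_pos.mpr hl1)

end

theorem dirClosed_of_algClosed_general {Y : Type*} [AddCommGroup Y] [Module ℝ Y]
    (A : Set Y) (k : Y)
    (hcl : AlgClosed A) (hrec : -k ∈ recCone A) :
    DirClosed A k := by
  rintro y ⟨t, -, -, htend, hmem⟩
  exact hcl.mem_of_forall_sub_smul_mem fun s hs => sub_smul_mem_of_tendsto hrec htend hmem hs

theorem dirClosed_of_algClosed {Y : Type*} [AddCommGroup Y] [Module ℝ Y]
    (A : Set Y) (hA : A.Nonempty) (k : Y) (hk : k ≠ 0)
    (hcl : AlgClosed A) (hrec : -k ∈ recCone A) :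
    DirClosed A k :=
  dirClosed_of_algClosed_general A k hcl hrec
end

section
/- For a proper subset A of Y and k ∈ Y \ {0}, the following are equivalent: (a) k ∈ −0⁺A; (b) A = H − C for some proper subset H of Y and a convex cone C with k ∈ C; (c) A = A − C for some non-trivial convex cone C with k ∈ C; (d) A = A − C for some non-trivial cone C with k ∈ C. -/
/-! A set `A` with `-k ∈ 0⁺A` absorbs the ray `ℝ₊ k`, i.e. `A = A - ℝ₊ k`, which gives the
representations (b)–(d) with `C = ℝ₊ k`. Conversely `A = A - C` with `k ∈ C` means that `A` is
stable under subtracting `t • k` for all `t ≥ 0`. For (b) ⇒ (c): a convex cone is closed under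
addition, so `(H - C) - C = H - C`, and `C ≠ Y` because otherwise `A = H - Y = Y`. -/

open Pointwise

theorem setOf_exists_sub_eq_sub {α : Type*} [Sub α] (H C : Set α) :
    {x : α | ∃ h ∈ H, ∃ c ∈ C, x = h - c} = H - C := by
  ext x
  simp only [Set.mem_ofPred_eq, Set.mem_sub, eq_comm]

theorem Set.Nonempty.sub_univ {α : Type*} [AddGroup α] {H : Set α} (hH : H.Nonempty) :
    H - Set.univ = Set.univ := by
  rw [sub_eq_add_neg, Set.neg_univ, Set.add_univ hH]

section

variable {Y : Type*} [AddCommGroup Y] [Module ℝ Y]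

namespace IsCone

variable {C : Set Y}

theorem zero_mem (hC : IsCone C) (hne : C.Nonempty) : (0 : Y) ∈ C := by
  obtain ⟨c, hc⟩ := hne
  simpa using hC 0 le_rfl c hc

theorem add_mem (hC : IsCone C) (hconv : Convex ℝ C) {c₁ c₂ : Y} (h₁ : c₁ ∈ C) (h₂ : c₂ ∈ C) :
    c₁ + c₂ ∈ C := by
  have hmid : (1 / 2 : ℝ) • c₁ + (1 / 2 : ℝ) • c₂ ∈ C :=
    hconv h₁ h₂ (by norm_num) (by norm_num) (by norm_num)
  simpa [smul_add, smul_smul] using hC 2 zero_le_two _ hmid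

theorem add_self (hC : IsCone C) (hconv : Convex ℝ C) (hne : C.Nonempty) : C + C = C := by
  refine subset_antisymm ?_ fun c hc => ⟨c, hc, 0, hC.zero_mem hne, add_zero c⟩
  rintro _ ⟨c₁, h₁, c₂, h₂, rfl⟩
  exact hC.add_mem hconv h₁ h₂

theorem sub_sub_eq (hC : IsCone C) (hconv : Convex ℝ C) (hne : C.Nonempty) (H : Set Y) :
    H - C - C = H - C := by
  rw [sub_sub, hC.add_self hconv hne]

end IsCone

def nonnegRay (k : Y) : Set Y :=
  {x | ∃ t : ℝ, 0 ≤ t ∧ t • k = x}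

theorem mem_nonnegRay_self (k : Y) : k ∈ nonnegRay k :=
  ⟨1, zero_le_one, one_smul ℝ k⟩

theorem isCone_nonnegRay (k : Y) : IsCone (nonnegRay k) := by
  rintro l hl _ ⟨t, ht, rfl⟩
  exact ⟨l * t, mul_nonneg hl ht, mul_smul l t k⟩

theorem convex_nonnegRay (k : Y) : Convex ℝ (nonnegRay k) := by
  rintro _ ⟨t, ht, rfl⟩ _ ⟨s, hs, rfl⟩ a b ha hb -
  exact ⟨a * t + b * s, by positivity, by rw [add_smul, mul_smul, mul_smul]⟩

theorem sub_nonnegRay_eq_of_neg_mem_recCone {A : Set Y} {k : Y} (h : -k ∈ recCone A) :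
    A - nonnegRay k = A := by
  refine subset_antisymm ?_ fun a ha => ⟨a, ha, 0, ⟨0, le_rfl, zero_smul ℝ k⟩, sub_zero a⟩
  rintro _ ⟨a, ha, _, ⟨t, ht, rfl⟩, rfl⟩
  simpa [sub_eq_add_neg] using h a ha t ht

theorem neg_mem_recCone_of_sub_eq {A C : Set Y} {k : Y} (hC : IsCone C) (hk : k ∈ C)
    (hA : A - C = A) : -k ∈ recCone A := by
  intro a ha t ht
  rw [smul_neg, ← sub_eq_add_neg, ← hA]
  exact Set.sub_mem_sub ha (hC t ht k hk)

end

theorem recCone_mem_tfae {Y : Type*} [AddCommGroup Y] [Module ℝ Y]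
    (A : Set Y) (hA : A.Nonempty) (hAne : A ≠ Set.univ) (k : Y) (hk : k ≠ 0) :
    List.TFAE
      [ -k ∈ recCone A,
        ∃ (H C : Set Y), H ≠ Set.univ ∧ Convex ℝ C ∧ IsCone C ∧ k ∈ C ∧
          A = {x : Y | ∃ h ∈ H, ∃ c ∈ C, x = h - c},
        ∃ C : Set Y, Convex ℝ C ∧ IsCone C ∧ C.Nonempty ∧ C ≠ {0} ∧ C ≠ Set.univ ∧
          k ∈ C ∧ A = {x : Y | ∃ a ∈ A, ∃ c ∈ C, x = a - c},
        ∃ C : Set Y, IsCone C ∧ C.Nonempty ∧ C ≠ {0} ∧ C ≠ Set.univ ∧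
          k ∈ C ∧ A = {x : Y | ∃ a ∈ A, ∃ c ∈ C, x = a - c} ] := by
  simp only [setOf_exists_sub_eq_sub]
  tfae_have 1 → 2 := fun h =>
    ⟨A, nonnegRay k, hAne, convex_nonnegRay k, isCone_nonnegRay k, mem_nonnegRay_self k,
      (sub_nonnegRay_eq_of_neg_mem_recCone h).symm⟩
  tfae_have 2 → 3 := by
    rintro ⟨H, C, -, hconv, hC, hkC, rfl⟩
    refine ⟨C, hconv, hC, ⟨k, hkC⟩, ?_, ?_, hkC, (hC.sub_sub_eq hconv ⟨k, hkC⟩ H).symm⟩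
    · rintro rfl
      exact hk hkC
    · rintro rfl
      exact hAne hA.of_sub_left.sub_univ
  tfae_have 3 → 4 := fun ⟨C, _, hC⟩ => ⟨C, hC⟩
  tfae_have 4 → 1 := fun ⟨C, hC, _, _, _, hkC, hA⟩ => neg_mem_recCone_of_sub_eq hC hkC hA.symm
  tfae_finish
end

section
/- For y⁰ ∈ A + ℝk and y¹ ∈ 0⁺A + ℝk, one has y⁰ + y¹ ∈ A + ℝk and φ_{A,k}(y⁰ + y¹) ≤ φ_{A,k}(y⁰) + φ_{0⁺A,k}(y¹). -/
open scoped Pointwise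

section phi

variable {Y : Type*} [AddCommGroup Y] [Module ℝ Y]

theorem phi_le_coe {A : Set Y} {k y : Y} {t : ℝ} (h : y - t • k ∈ A) : phi A k y ≤ t :=
  sInf_le ⟨t, h, rfl⟩

theorem phi_ne_top {A : Set Y} {k y : Y} {t : ℝ} (h : y - t • k ∈ A) : phi A k y ≠ ⊤ :=
  ne_top_of_le_ne_top (EReal.coe_ne_top t) (phi_le_coe h)

theorem add_recCone_subset (A : Set Y) : A + recCone A ⊆ A := by
  rintro _ ⟨a, ha, u, hu, rfl⟩
  simpa using hu a ha 1 zero_le_one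

/-- The finiteness hypotheses rule out `⊤ + ⊥`, which is `⊥` in `EReal`. -/
theorem phi_add_le_add {A B C : Set Y} (hABC : A + B ⊆ C) {k y₀ y₁ : Y}
    (h₀ : phi A k y₀ ≠ ⊤) (h₁ : phi B k y₁ ≠ ⊤) :
    phi C k (y₀ + y₁) ≤ phi A k y₀ + phi B k y₁ := by
  refine EReal.le_add_of_forall_gt (Or.inr h₁) (Or.inl h₀) fun a ha b hb => ?_
  obtain ⟨_, ⟨s, hs, rfl⟩, hsa⟩ := sInf_lt_iff.1 ha
  obtain ⟨_, ⟨t, ht, rfl⟩, htb⟩ := sInf_lt_iff.1 hb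
  have hst : y₀ + y₁ - (s + t) • k ∈ C := by
    convert hABC (Set.add_mem_add hs ht) using 1
    module
  calc phi C k (y₀ + y₁) ≤ ((s + t : ℝ) : EReal) := phi_le_coe hst
    _ = s + t := EReal.coe_add s t
    _ ≤ a + b := add_le_add hsa.le htb.le

end phi

theorem phi_recCone_subadd_general {Y : Type*} [AddCommGroup Y] [Module ℝ Y]
    (A : Set Y) (k : Y) (y0 y1 : Y)
    (hy0 : ∃ a ∈ A, ∃ t : ℝ, y0 = a + t • k)
    (hy1 : ∃ u ∈ recCone A, ∃ t : ℝ, y1 = u + t • k) :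
    (∃ a ∈ A, ∃ t : ℝ, y0 + y1 = a + t • k) ∧
      phi A k (y0 + y1) ≤ phi A k y0 + phi (recCone A) k y1 := by
  obtain ⟨a, ha, s, rfl⟩ := hy0
  obtain ⟨u, hu, t, rfl⟩ := hy1
  have hs : a + s • k - s • k ∈ A := by simpa using ha
  have ht : u + t • k - t • k ∈ recCone A := by simpa using hu
  exact ⟨⟨a + u, add_recCone_subset A (Set.add_mem_add ha hu), s + t, by module⟩,
    phi_add_le_add (add_recCone_subset A) (phi_ne_top hs) (phi_ne_top ht)⟩

theorem phi_recCone_subadd {Y : Type*} [AddCommGroup Y] [Module ℝ Y]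
    (A : Set Y) (hA : A.Nonempty) (k : Y) (hk : k ≠ 0) (y0 y1 : Y)
    (hy0 : ∃ a ∈ A, ∃ t : ℝ, y0 = a + t • k)
    (hy1 : ∃ u ∈ recCone A, ∃ t : ℝ, y1 = u + t • k) :
    (∃ a ∈ A, ∃ t : ℝ, y0 + y1 = a + t • k) ∧
      phi A k (y0 + y1) ≤ phi A k y0 + phi (recCone A) k y1 :=
  phi_recCone_subadd_general A k y0 y1 hy0 hy1
end

section
/- If A is k-directionally closed, then its recession cone 0⁺A is k-directionally closed. -/
theorem DirClosed.smul_direction {Y : Type*} [AddCommGroup Y] [Module ℝ Y] {A : Set Y} {k : Y}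
    (h : DirClosed A k) {s : ℝ} (hs : 0 < s) : DirClosed A (s • k) := by
  rintro y ⟨t, hpos, hanti, hlim, hmem⟩
  refine h y ⟨fun n => t n * s, fun n => mul_pos (hpos n) hs,
    fun m n hmn => mul_le_mul_of_nonneg_right (hanti hmn) hs.le, ?_, fun n => ?_⟩
  · simpa using hlim.mul_const s
  · simpa only [smul_smul] using hmem n

theorem recCone_dirClosed_general {Y : Type*} [AddCommGroup Y] [Module ℝ Y]
    (A : Set Y) (k : Y)
    (hdc : DirClosed A k) : DirClosed (recCone A) k := by
  rintro u ⟨t, hpos, hanti, hlim, hmem⟩ a ha s hs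
  rcases hs.eq_or_lt with rfl | hs
  · simpa using ha
  refine (hdc.smul_direction hs) (a + s • u) ⟨t, hpos, hanti, hlim, fun n => ?_⟩
  have hshift : a + s • u - t n • s • k = a + s • (u - t n • k) := by
    rw [smul_sub, smul_comm (t n) s k]; abel
  exact hshift ▸ hmem n a ha s hs.le

theorem recCone_dirClosed {Y : Type*} [AddCommGroup Y] [Module ℝ Y]
    (A : Set Y) (hA : A.Nonempty) (k : Y) (hk : k ≠ 0)
    (hdc : DirClosed A k) : DirClosed (recCone A) k :=
  recCone_dirClosed_general A k hdc
end

section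
/- If A − B ⊆ A, then φ_{A,k} is B-monotone: for y¹, y² ∈ dom φ_{A,k} with y² − y¹ ∈ B one has φ_{A,k}(y¹) ≤ φ_{A,k}(y²). Conversely, if k ∈ −0⁺A, A is k-directionally closed, A − B ⊆ A + ℝk, and φ_{A,k} is B-monotone, then A − B ⊆ A. -/
section

variable {Y : Type*} [AddCommGroup Y] [Module ℝ Y] {A : Set Y} {k y : Y}

theorem phi_nonpos_of_mem (hy : y ∈ A) : phi A k y ≤ 0 :=
  phi_le_of_sub_smul_mem (t := 0) (by simpa using hy)

theorem phi_le_phi_of_sub_mem {B : Set Y} (hAB : ∀ a ∈ A, ∀ b ∈ B, a - b ∈ A) {y₁ y₂ : Y}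
    (hB : y₂ - y₁ ∈ B) : phi A k y₁ ≤ phi A k y₂ := by
  refine sInf_le_sInf (Set.image_mono fun t (ht : y₂ - t • k ∈ A) => show y₁ - t • k ∈ A from ?_)
  rw [show y₁ - t • k = (y₂ - t • k) - (y₂ - y₁) by abel]
  exact hAB _ ht _ hB

theorem sub_smul_mem_of_phi_lt (hk : -k ∈ recCone A) {t : ℝ} (ht : phi A k y < t) :
    y - t • k ∈ A := by
  obtain ⟨_, ⟨s, hs, rfl⟩, hst⟩ := sInf_lt_iff.mp ht
  have hst : s < t := EReal.coe_lt_coe_iff.mp hst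
  have h : (y - s • k) + (t - s) • -k = y - t • k := by
    rw [smul_neg, sub_smul]
    abel
  exact h ▸ hk _ hs (t - s) (by linarith)

theorem DirClosed.mem_of_forall_pos (hA : DirClosed A k)
    (h : ∀ t : ℝ, 0 < t → y - t • k ∈ A) : y ∈ A :=
  hA y ⟨fun n => 1 / ((n : ℝ) + 1), fun _ => Nat.one_div_pos_of_nat,
    fun _ _ hmn => Nat.one_div_le_one_div hmn, tendsto_one_div_add_atTop_nhds_zero_nat,
    fun _ => h _ Nat.one_div_pos_of_nat⟩

theorem mem_of_phi_nonpos (hk : -k ∈ recCone A) (hA : DirClosed A k)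
    (hy : phi A k y ≤ 0) : y ∈ A :=
  hA.mem_of_forall_pos fun _ ht =>
    sub_smul_mem_of_phi_lt hk (hy.trans_lt (EReal.coe_pos.mpr ht))

end

theorem phi_monotone_iff_general {Y : Type*} [AddCommGroup Y] [Module ℝ Y]
    (A B : Set Y) (k : Y) :
    ((∀ a ∈ A, ∀ b ∈ B, a - b ∈ A) →
      ∀ y1 y2 : Y, (∃ a ∈ A, ∃ t : ℝ, y1 = a + t • k) →
        (∃ a ∈ A, ∃ t : ℝ, y2 = a + t • k) → y2 - y1 ∈ B →
        phi A k y1 ≤ phi A k y2) ∧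
    (-k ∈ recCone A → DirClosed A k →
      (∀ a ∈ A, ∀ b ∈ B, ∃ a' ∈ A, ∃ t : ℝ, a - b = a' + t • k) →
      (∀ y1 y2 : Y, (∃ a ∈ A, ∃ t : ℝ, y1 = a + t • k) →
        (∃ a ∈ A, ∃ t : ℝ, y2 = a + t • k) → y2 - y1 ∈ B →
        phi A k y1 ≤ phi A k y2) →
      ∀ a ∈ A, ∀ b ∈ B, a - b ∈ A) := by
  refine ⟨fun hAB y1 y2 _ _ hB => phi_le_phi_of_sub_mem hAB hB, ?_⟩
  intro hrec hdc hdom hmono a ha b hb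
  have hmono_ab : phi A k (a - b) ≤ phi A k a :=
    hmono (a - b) a (hdom a ha b hb) ⟨a, ha, 0, by simp⟩ (by simpa using hb)
  exact mem_of_phi_nonpos hrec hdc (hmono_ab.trans (phi_nonpos_of_mem ha))

theorem phi_monotone_iff {Y : Type*} [AddCommGroup Y] [Module ℝ Y]
    (A B : Set Y) (hA : A.Nonempty) (k : Y) (hk : k ≠ 0) :
    ((∀ a ∈ A, ∀ b ∈ B, a - b ∈ A) →
      ∀ y1 y2 : Y, (∃ a ∈ A, ∃ t : ℝ, y1 = a + t • k) →
        (∃ a ∈ A, ∃ t : ℝ, y2 = a + t • k) → y2 - y1 ∈ B →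
        phi A k y1 ≤ phi A k y2) ∧
    (-k ∈ recCone A → DirClosed A k →
      (∀ a ∈ A, ∀ b ∈ B, ∃ a' ∈ A, ∃ t : ℝ, a - b = a' + t • k) →
      (∀ y1 y2 : Y, (∃ a ∈ A, ∃ t : ℝ, y1 = a + t • k) →
        (∃ a ∈ A, ∃ t : ℝ, y2 = a + t • k) → y2 - y1 ∈ B →
        phi A k y1 ≤ phi A k y2) →
      ∀ a ∈ A, ∀ b ∈ B, a - b ∈ A) :=
  phi_monotone_iff_general A B k
end

section
/- Let C be a non-trivial algebraically closed convex cone and k ∈ −core C. Then the Minkowski functional of C + k satisfies p_{C+k}(y) = max{φ_{C,k}(y), 0} for all y ∈ Y; in particular p_{C+k} = φ_{C,k} on Y \ C and p_{C+k} = 0 on C, and p_{C+k} is finite-valued and sublinear. -/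
/-- The Minkowski functional of a set, valued in `EReal`. -/
noncomputable def mink {Y : Type*} [AddCommGroup Y] [Module ℝ Y] (M : Set Y) (y : Y) : EReal :=
  sInf ((fun l : ℝ => (l : EReal)) '' {l : ℝ | 0 < l ∧ ∃ m ∈ M, y = l • m})

open Set Pointwise

theorem EReal.sInf_coe_image {s : Set ℝ} (hne : s.Nonempty) (hbdd : BddBelow s) :
    sInf ((fun t : ℝ => (t : EReal)) '' s) = ((sInf s : ℝ) : EReal) :=
  (Monotone.map_csInf_of_continuousAt continuous_coe_real_ereal.continuousAt
    (fun _ _ h => EReal.coe_le_coe_iff.2 h) hne hbdd).symm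

theorem Real.sInf_Ici_inter_Ioi (a b : ℝ) : sInf (Ici a ∩ Ioi b) = max a b := by
  rcases le_or_gt a b with hab | hab
  · rw [inter_eq_right.2 (Ioi_subset_Ici hab), csInf_Ioi, max_eq_right hab]
  · rw [inter_eq_left.2 (Ici_subset_Ioi.2 hab), csInf_Ici, max_eq_left hab.le]

theorem mink_eq_gauge {Y : Type*} [AddCommGroup Y] [Module ℝ Y] {M : Set Y} {y : Y}
    (h : ∃ r : ℝ, 0 < r ∧ y ∈ r • M) : mink M y = gauge M y := by
  have hset : {l : ℝ | 0 < l ∧ ∃ m ∈ M, y = l • m} = {r ∈ Ioi 0 | y ∈ r • M} := by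
    ext r
    simp only [mem_ofPred_eq, mem_Ioi, mem_smul_set, eq_comm]
  rw [mink, gauge_def, hset]
  exact EReal.sInf_coe_image h ⟨0, fun _ hr => le_of_lt hr.1⟩

section DirectionalMinimum

variable {Y : Type*} [AddCommGroup Y] [Module ℝ Y] {C : Set Y} {k : Y}

/-- `φ_{C,k}` as a real number; `sInf` makes it `0` where the set is empty or unbounded below. -/
noncomputable def phiReal (C : Set Y) (k : Y) (y : Y) : ℝ :=
  sInf {t : ℝ | y - t • k ∈ C}

theorem IsCone.add_mem_s17 (hcone : IsCone C) (hconv : Convex ℝ C) {a b : Y} (ha : a ∈ C)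
    (hb : b ∈ C) : a + b ∈ C := by
  have hmid := hconv ha hb (by norm_num : (0 : ℝ) ≤ 1 / 2) (by norm_num : (0 : ℝ) ≤ 1 / 2)
    (by norm_num)
  have htwice : (2 : ℝ) • ((1 / 2 : ℝ) • a + (1 / 2 : ℝ) • b) = a + b := by
    rw [smul_add, smul_smul, smul_smul]; norm_num
  simpa only [htwice] using hcone 2 (by norm_num) _ hmid

theorem sub_smul_mem_of_le_s17 (hconv : Convex ℝ C) (hcone : IsCone C) (hk : -k ∈ C) {y : Y}
    {t t' : ℝ} (ht : y - t • k ∈ C) (htt' : t ≤ t') : y - t' • k ∈ C := by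
  have hsum := hcone.add_mem_s17 hconv ht (hcone (t' - t) (sub_nonneg.2 htt') _ hk)
  rwa [show y - t • k + (t' - t) • -k = y - t' • k by module] at hsum

theorem exists_sub_smul_mem (hcone : IsCone C) (hk : -k ∈ algCore C) (y : Y) :
    ∃ t : ℝ, y - t • k ∈ C := by
  obtain ⟨t, ht, hseg⟩ := hk.2 y
  refine ⟨t⁻¹, ?_⟩
  have hscaled := hcone t⁻¹ (inv_nonneg.2 ht.le) _ (hseg t ht.le le_rfl)
  rwa [smul_add, smul_smul, inv_mul_cancel₀ ht.ne', one_smul, smul_neg, neg_add_eq_sub]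
    at hscaled

theorem bddBelow_setOf_sub_smul_mem (hconv : Convex ℝ C) (hcone : IsCone C)
    (hCuniv : C ≠ univ) (hk : -k ∈ algCore C) (y : Y) :
    BddBelow {t : ℝ | y - t • k ∈ C} := by
  by_contra hunbdd
  refine hCuniv (eq_univ_of_forall fun z => ?_)
  -- `z = ((z - y) - t • k) + (y + t • k)`, and the second summand lies in `C` for every `t`.
  obtain ⟨t, ht⟩ := exists_sub_smul_mem hcone hk (z - y)
  obtain ⟨s, hs, hst⟩ := not_bddBelow_iff.1 hunbdd (-t)
  have hy : y - (-t) • k ∈ C := sub_smul_mem_of_le_s17 hconv hcone hk.1 hs hst.le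
  have hsum := hcone.add_mem_s17 hconv ht hy
  rwa [show z - y - t • k + (y - (-t) • k) = z by module] at hsum

theorem sub_phiReal_smul_mem (hconv : Convex ℝ C) (hcone : IsCone C) (hcl : AlgClosed C)
    (hk : -k ∈ algCore C) (y : Y) : y - phiReal C k y • k ∈ C := by
  set φ := phiReal C k y
  have habove : ∀ t, φ < t → y - t • k ∈ C := fun t ht => by
    obtain ⟨s, hs, hst⟩ := exists_lt_of_csInf_lt (exists_sub_smul_mem hcone hk y) ht
    exact sub_smul_mem_of_le_s17 hconv hcone hk.1 hs hst.le
  refine hcl _ (habove (φ + 1) (lt_add_one φ)) _ fun l hl0 hl1 => ?_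
  rw [show y - (φ + 1) • k + l • (y - φ • k - (y - (φ + 1) • k)) = y - (φ + 1 - l) • k by
      module]
  exact habove _ (by linarith)

theorem sub_smul_mem_iff_phiReal_le (hconv : Convex ℝ C) (hcone : IsCone C) (hCuniv : C ≠ univ)
    (hcl : AlgClosed C) (hk : -k ∈ algCore C) {y : Y} {t : ℝ} :
    y - t • k ∈ C ↔ phiReal C k y ≤ t :=
  ⟨fun ht => csInf_le (bddBelow_setOf_sub_smul_mem hconv hcone hCuniv hk y) ht,
    sub_smul_mem_of_le_s17 hconv hcone hk.1 (sub_phiReal_smul_mem hconv hcone hcl hk y)⟩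

theorem phi_eq_coe_phiReal (hconv : Convex ℝ C) (hcone : IsCone C) (hCuniv : C ≠ univ)
    (hk : -k ∈ algCore C) (y : Y) : phi C k y = phiReal C k y :=
  EReal.sInf_coe_image (exists_sub_smul_mem hcone hk y)
    (bddBelow_setOf_sub_smul_mem hconv hcone hCuniv hk y)

theorem phiReal_nonpos_iff (hconv : Convex ℝ C) (hcone : IsCone C) (hCuniv : C ≠ univ)
    (hcl : AlgClosed C) (hk : -k ∈ algCore C) {y : Y} : phiReal C k y ≤ 0 ↔ y ∈ C := by
  rw [← sub_smul_mem_iff_phiReal_le hconv hcone hCuniv hcl hk, zero_smul, sub_zero]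

theorem phiReal_add_le (hconv : Convex ℝ C) (hcone : IsCone C) (hCuniv : C ≠ univ)
    (hcl : AlgClosed C) (hk : -k ∈ algCore C) (x y : Y) :
    phiReal C k (x + y) ≤ phiReal C k x + phiReal C k y := by
  rw [← sub_smul_mem_iff_phiReal_le hconv hcone hCuniv hcl hk, add_smul,
    show x + y - (phiReal C k x • k + phiReal C k y • k)
      = (x - phiReal C k x • k) + (y - phiReal C k y • k) by abel]
  exact hcone.add_mem_s17 hconv (sub_phiReal_smul_mem hconv hcone hcl hk x)
    (sub_phiReal_smul_mem hconv hcone hcl hk y)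

theorem mem_smul_image_add_iff (hcone : IsCone C) {r : ℝ} (hr : 0 < r) {y : Y} :
    y ∈ r • ((fun c => c + k) '' C) ↔ y - r • k ∈ C := by
  rw [← image_smul, image_image, mem_image]
  constructor
  · rintro ⟨c, hc, rfl⟩
    simpa only [smul_add, add_sub_cancel_right] using hcone r hr.le c hc
  · intro hy
    refine ⟨r⁻¹ • (y - r • k), hcone r⁻¹ (inv_nonneg.2 hr.le) _ hy, ?_⟩
    rw [smul_add, smul_smul, mul_inv_cancel₀ hr.ne', one_smul, sub_add_cancel]

theorem gauge_image_add_eq_max (hconv : Convex ℝ C) (hcone : IsCone C) (hCuniv : C ≠ univ)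
    (hcl : AlgClosed C) (hk : -k ∈ algCore C) (y : Y) :
    gauge ((fun c => c + k) '' C) y = max (phiReal C k y) 0 := by
  have hset : {r ∈ Ioi (0 : ℝ) | y ∈ r • ((fun c => c + k) '' C)}
      = Ici (phiReal C k y) ∩ Ioi 0 := by
    ext r
    simp only [mem_ofPred_eq, mem_inter_iff, mem_Ici, mem_Ioi, and_comm (a := phiReal C k y ≤ r)]
    exact and_congr_right fun hr => (mem_smul_image_add_iff hcone hr).trans
      (sub_smul_mem_iff_phiReal_le hconv hcone hCuniv hcl hk)
  rw [gauge_def, hset, Real.sInf_Ici_inter_Ioi]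

end DirectionalMinimum

theorem minkowski_eq_max_phi_general {Y : Type*} [AddCommGroup Y] [Module ℝ Y]
    (C : Set Y) (hconv : Convex ℝ C) (hcone : IsCone C)
    (hCuniv : C ≠ Set.univ)
    (hcl : AlgClosed C) (k : Y) (hk : -k ∈ algCore C) :
    ∃ p : Y → ℝ,
      (∀ y : Y, (p y : EReal) = mink ((fun c => c + k) '' C) y) ∧
      (∀ y : Y, (p y : EReal) = max (phi C k y) 0) ∧
      (∀ y : Y, y ∉ C → (p y : EReal) = phi C k y) ∧
      (∀ y ∈ C, p y = 0) ∧
      (∀ c : ℝ, 0 ≤ c → ∀ y : Y, p (c • y) = c * p y) ∧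
      (∀ x y : Y, p (x + y) ≤ p x + p y) := by
  have hgauge := gauge_image_add_eq_max hconv hcone hCuniv hcl hk
  have hphi := phi_eq_coe_phiReal hconv hcone hCuniv hk
  have hnonpos (y : Y) := phiReal_nonpos_iff hconv hcone hCuniv hcl hk (y := y)
  refine ⟨gauge ((fun c => c + k) '' C), fun y => ?_, fun y => ?_, fun y hy => ?_, fun y hy => ?_,
    fun c hc y => gauge_smul_of_nonneg hc y, fun x y => ?_⟩
  · refine (mink_eq_gauge ⟨max (phiReal C k y) 1, by positivity, ?_⟩).symm
    exact (mem_smul_image_add_iff hcone (by positivity)).2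
      ((sub_smul_mem_iff_phiReal_le hconv hcone hCuniv hcl hk).2 (le_max_left _ _))
  · rw [hgauge, hphi]
    norm_cast
  · rw [hgauge, hphi, max_eq_left (not_le.1 (mt (hnonpos y).1 hy)).le]
  · rw [hgauge, max_eq_right ((hnonpos y).2 hy)]
  · simp only [hgauge]
    exact max_le ((phiReal_add_le hconv hcone hCuniv hcl hk x y).trans
      (add_le_add (le_max_left _ _) (le_max_left _ _))) (by positivity)

theorem minkowski_eq_max_phi {Y : Type*} [AddCommGroup Y] [Module ℝ Y]
    (C : Set Y) (hconv : Convex ℝ C) (hcone : IsCone C)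
    (hne : C.Nonempty) (hC0 : C ≠ {0}) (hCuniv : C ≠ Set.univ)
    (hcl : AlgClosed C) (k : Y) (hk : -k ∈ algCore C) :
    ∃ p : Y → ℝ,
      (∀ y : Y, (p y : EReal) = mink ((fun c => c + k) '' C) y) ∧
      (∀ y : Y, (p y : EReal) = max (phi C k y) 0) ∧
      (∀ y : Y, y ∉ C → (p y : EReal) = phi C k y) ∧
      (∀ y ∈ C, p y = 0) ∧
      (∀ c : ℝ, 0 ≤ c → ∀ y : Y, p (c • y) = c * p y) ∧
      (∀ x y : Y, p (x + y) ≤ p x + p y) :=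
  minkowski_eq_max_phi_general C hconv hcone hCuniv hcl k hk
end

section
/- Let C be a non-trivial algebraically closed convex pointed cone, k ∈ core C, and a ∈ Y. Let ‖·‖_{C,k} be the order unit norm given by the Minkowski functional of the order interval [−k,k]_C = (C − k) ∩ (k − C). Then ‖y − a‖_{C,k} = φ_{a−C,k}(y) for all y ∈ a + C. -/
/-
Put `z = y - a ∈ C`. Both sides are infima over `T = {t | t • k - z ∈ C}`: the
Minkowski functional of `[-k, k]_C` only sees the positive elements of `T`
(for `l > 0`, `z ∈ l • [-k, k]_C` iff `l • k - z ∈ C`, the lower bound `z + l • k ∈ C`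
being automatic), and `φ_{a-C,k}(y)` is the infimum of all of `T`. Since `k ∈ C`, the
set `T` is upward closed, and pointedness of `C` together with `k ≠ 0` forces `T ⊆ [0, ∞)`;
so discarding `0` from `T` does not change its infimum.
-/

namespace EReal

theorem sInf_coe_image_pos_eq_of_isUpperSet {S : Set ℝ} (hS : IsUpperSet S)
    (hS_nonneg : ∀ t ∈ S, 0 ≤ t) :
    sInf ((fun t : ℝ => (t : EReal)) '' {t | 0 < t ∧ t ∈ S}) =
      sInf ((fun t : ℝ => (t : EReal)) '' S) := by
  refine le_antisymm (le_sInf ?_) (sInf_le_sInf (Set.image_mono fun t ht => ht.2))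
  rintro _ ⟨t, ht, rfl⟩
  refine le_of_forall_gt_imp_ge_of_dense fun c hc => ?_
  obtain ⟨r, htr, hrc⟩ := EReal.lt_iff_exists_real_btwn.mp hc
  replace htr : t < r := EReal.coe_lt_coe_iff.mp htr
  have hr : 0 < r ∧ r ∈ S := ⟨(hS_nonneg t ht).trans_lt htr, hS htr.le ht⟩
  exact (sInf_le (Set.mem_image_of_mem (fun t : ℝ => (t : EReal)) hr)).trans hrc.le

end EReal

namespace IsCone

variable {Y : Type*} [AddCommGroup Y] [Module ℝ Y] {C : Set Y}

theorem add_mem_s18 (hcone : IsCone C) (hconv : Convex ℝ C) {x y : Y} (hx : x ∈ C) (hy : y ∈ C) :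
    x + y ∈ C := by
  have hmid : (1 / 2 : ℝ) • x + (1 / 2 : ℝ) • y ∈ C := hconv hx hy (by norm_num) (by norm_num)
    (by norm_num)
  have h := hcone 2 (by norm_num) _ hmid
  rwa [smul_add, smul_smul, smul_smul, show (2 : ℝ) * (1 / 2) = 1 by norm_num, one_smul,
    one_smul] at h

theorem smul_inv_mem (hcone : IsCone C) {l : ℝ} (hl : 0 < l) {x : Y} (hx : l • x ∈ C) : x ∈ C := by
  simpa [smul_smul, inv_mul_cancel₀ hl.ne'] using hcone l⁻¹ (inv_nonneg.mpr hl.le) _ hx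

theorem ne_zero_of_mem_algCore (hcone : IsCone C) (hCuniv : C ≠ Set.univ) {k : Y}
    (hk : k ∈ algCore C) : k ≠ 0 := by
  rintro rfl
  refine hCuniv (Set.eq_univ_of_forall fun w => ?_)
  obtain ⟨t, ht, hs⟩ := hk.2 w
  exact hcone.smul_inv_mem ht (by simpa using hs t ht.le le_rfl)

theorem nonneg_of_smul_mem (hcone : IsCone C) (hpointed : C ∩ (-C) = {0}) {k : Y} (hkC : k ∈ C)
    (hk0 : k ≠ 0) {t : ℝ} (ht : t • k ∈ C) : 0 ≤ t := by
  by_contra! hneg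
  have hneg_mem : -(t • k) ∈ C := by
    simpa only [neg_smul] using hcone (-t) (by linarith) _ hkC
  have hzero : t • k ∈ C ∩ (-C) := ⟨ht, hneg_mem⟩
  rw [hpointed, Set.mem_singleton_iff, smul_eq_zero] at hzero
  exact hzero.elim hneg.ne hk0

theorem exists_mem_orderInterval_eq_smul_iff (hcone : IsCone C) (hconv : Convex ℝ C) {k z : Y}
    (hkC : k ∈ C) (hz : z ∈ C) {l : ℝ} (hl : 0 < l) :
    (∃ m ∈ {x : Y | x + k ∈ C} ∩ {x : Y | k - x ∈ C}, z = l • m) ↔ l • k - z ∈ C := by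
  constructor
  · rintro ⟨m, ⟨-, hm⟩, rfl⟩
    simpa only [smul_sub] using hcone l hl.le _ hm
  · intro h
    refine ⟨l⁻¹ • z, ⟨?_, ?_⟩, by rw [smul_smul, mul_inv_cancel₀ hl.ne', one_smul]⟩
    · refine hcone.smul_inv_mem hl ?_
      simpa [smul_add, smul_smul, mul_inv_cancel₀ hl.ne'] using
        hcone.add_mem_s18 hconv hz (hcone l hl.le _ hkC)
    · refine hcone.smul_inv_mem hl ?_
      simpa [smul_sub, smul_smul, mul_inv_cancel₀ hl.ne'] using h

theorem mink_orderInterval_eq (hcone : IsCone C) (hconv : Convex ℝ C) {k z : Y} (hkC : k ∈ C)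
    (hz : z ∈ C) :
    mink ({x : Y | x + k ∈ C} ∩ {x : Y | k - x ∈ C}) z =
      sInf ((fun t : ℝ => (t : EReal)) '' {t | 0 < t ∧ t • k - z ∈ C}) := by
  unfold mink
  congr 2
  ext l
  exact and_congr_right fun hl => hcone.exists_mem_orderInterval_eq_smul_iff hconv hkC hz hl

theorem isUpperSet_smul_sub_mem (hcone : IsCone C) (hconv : Convex ℝ C) {k : Y} (hkC : k ∈ C)
    (z : Y) : IsUpperSet {t : ℝ | t • k - z ∈ C} := by
  intro t r htr ht
  have h := hcone.add_mem_s18 hconv ht (hcone (r - t) (sub_nonneg.mpr htr) _ hkC)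
  rwa [sub_smul, sub_add_sub_cancel'] at h

end IsCone

theorem phi_sub_image_eq {Y : Type*} [AddCommGroup Y] [Module ℝ Y] (C : Set Y) (k a y : Y) :
    phi ((fun c => a - c) '' C) k y =
      sInf ((fun t : ℝ => (t : EReal)) '' {t | t • k - (y - a) ∈ C}) := by
  unfold phi
  congr 2
  ext t
  simp only [Set.mem_ofPred_eq, Set.mem_image]
  constructor
  · rintro ⟨c, hc, hct⟩
    have hc_eq : t • k - (y - a) = c := by
      rw [show y = a - c + t • k by rw [hct, sub_add_cancel]]
      abel
    rwa [hc_eq]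
  · exact fun hc => ⟨t • k - (y - a), hc, by abel⟩

theorem orderUnitNorm_eq_phi_general {Y : Type*} [AddCommGroup Y] [Module ℝ Y]
    (C : Set Y) (hconv : Convex ℝ C) (hcone : IsCone C)
    (hpointed : C ∩ (-C) = {0})
    (hCuniv : C ≠ Set.univ)
    (k : Y) (hk : k ∈ algCore C) (a : Y) :
    ∀ y : Y, y - a ∈ C →
      mink ({x : Y | x + k ∈ C} ∩ {x : Y | k - x ∈ C}) (y - a) =
        phi ((fun c => a - c) '' C) k y := by
  intro y hy
  have hkC : k ∈ C := hk.1
  have hk0 : k ≠ 0 := hcone.ne_zero_of_mem_algCore hCuniv hk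
  rw [hcone.mink_orderInterval_eq hconv hkC hy, phi_sub_image_eq]
  refine EReal.sInf_coe_image_pos_eq_of_isUpperSet
    (hcone.isUpperSet_smul_sub_mem hconv hkC _) fun t ht => ?_
  refine hcone.nonneg_of_smul_mem hpointed hkC hk0 ?_
  simpa using hcone.add_mem_s18 hconv ht hy

theorem orderUnitNorm_eq_phi {Y : Type*} [AddCommGroup Y] [Module ℝ Y]
    (C : Set Y) (hconv : Convex ℝ C) (hcone : IsCone C)
    (hpointed : C ∩ (-C) = {0})
    (hne : C.Nonempty) (hC0 : C ≠ {0}) (hCuniv : C ≠ Set.univ)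
    (hcl : AlgClosed C) (k : Y) (hk : k ∈ algCore C) (a : Y) :
    ∀ y : Y, y - a ∈ C →
      mink ({x : Y | x + k ∈ C} ∩ {x : Y | k - x ∈ C}) (y - a) =
        phi ((fun c => a - c) '' C) k y :=
  orderUnitNorm_eq_phi_general C hconv hcone hpointed hCuniv k hk a
end
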